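/- Let n ≥ 1. For every u ∈ T_B and every s > 0, one has 4 Re ρ(u, (0,…,0,si)) ≥ Σ_{k=1}^{n−1} |u_k|² + 2s. Consequently, for all z, w ∈ T_B, |z' − w'|² ≤ 4|ρ(z,w)|, where |z'−w'|² = Σ_{k=1}^{n−1} |z_k − w_k|². -/

import Mathlib

open MeasureTheory Complex ComplexConjugate

noncomputable section

/-- The tube domain `T_B ⊆ ℂ^(n+1)` (paper dimension `n+1 ≥ 1`). -/
def TB (n : ℕ) : Set (Fin (n + 1) → ℂ) :=
  {z | ∑ k : Fin n, (z k.castSucc).im ^ 2 < (z (Fin.last n)).im}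

/-- `ρ(z) = y_n − |y'|²`. -/
def rho (n : ℕ) (z : Fin (n + 1) → ℂ) : ℝ :=
  (z (Fin.last n)).im - ∑ k : Fin n, (z k.castSucc).im ^ 2

/-- `ρ(z,w) = (1/4)(Σ (z_k − conj w_k)² − 2i(z_n − conj w_n))`. -/
def rho2 (n : ℕ) (z w : Fin (n + 1) → ℂ) : ℂ :=
  (1 / 4) * ((∑ k : Fin n, (z k.castSucc - conj (w k.castSucc)) ^ 2)
    - 2 * Complex.I * (z (Fin.last n) - conj (w (Fin.last n))))

/-- The point `𝐢 = (0,…,0,i) ∈ T_B`. -/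
def iPt (n : ℕ) : Fin (n + 1) → ℂ := fun j => if j = Fin.last n then Complex.I else 0

/-- `c_α = Γ(n+1+α)/(2^(n+1) πⁿ Γ(α+1))` (paper `n` = `n+1` here). -/
def cA (n : ℕ) (α : ℝ) : ℝ :=
  Real.Gamma ((n : ℝ) + 2 + α) / (2 ^ (n + 2) * Real.pi ^ (n + 1) * Real.Gamma (α + 1))

/-- Wirtinger derivative `∂g/∂z_j = (1/2)(∂g/∂x_j − i ∂g/∂y_j)`. -/
def wdz (n : ℕ) (j : Fin (n + 1)) (g : (Fin (n + 1) → ℂ) → ℂ) : (Fin (n + 1) → ℂ) → ℂ :=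
  fun z => (1 / 2) * (fderiv ℝ g z (Pi.single j 1) - Complex.I * fderiv ℝ g z (Pi.single j Complex.I))

/-- Wirtinger derivative `∂g/∂z̄_j = (1/2)(∂g/∂x_j + i ∂g/∂y_j)`. -/
def wdzbar (n : ℕ) (j : Fin (n + 1)) (g : (Fin (n + 1) → ℂ) → ℂ) : (Fin (n + 1) → ℂ) → ℂ :=
  fun z => (1 / 2) * (fderiv ℝ g z (Pi.single j 1) + Complex.I * fderiv ℝ g z (Pi.single j Complex.I))

/-!
Expanding the squares gives the identity `4 Re ρ(z,w) = |z' − w'|² + 2ρ(z) + 2ρ(w)`, and `ρ > 0`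
on `T_B`. Both inequalities follow by dropping the `ρ`-terms, the second after
`Re ρ(z,w) ≤ |ρ(z,w)|`; for `w = (0,…,0,si)` one has `w' = 0` and `ρ(w) = s`.
-/

lemma rho_pos_of_mem_TB {n : ℕ} {z : Fin (n + 1) → ℂ} (hz : z ∈ TB n) : 0 < rho n z :=
  sub_pos.2 hz

lemma re_sq_sub_conj (a b : ℂ) :
    ((a - conj b) ^ 2).re = ‖a - b‖ ^ 2 - 2 * a.im ^ 2 - 2 * b.im ^ 2 := by
  rw [Complex.sq_norm, Complex.normSq_apply]
  simp only [sq, Complex.mul_re, Complex.sub_re, Complex.sub_im, Complex.conj_re, Complex.conj_im]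
  ring

lemma re_two_I_mul_sub_conj (a b : ℂ) :
    (2 * Complex.I * (a - conj b)).re = -2 * (a.im + b.im) := by
  simp only [Complex.mul_re, Complex.mul_im, Complex.sub_re, Complex.sub_im, Complex.I_re,
    Complex.I_im, Complex.conj_re, Complex.conj_im, Complex.re_ofNat, Complex.im_ofNat]
  ring

theorem four_mul_re_rho2 (n : ℕ) (z w : Fin (n + 1) → ℂ) :
    4 * (rho2 n z w).re =
      (∑ k : Fin n, ‖z k.castSucc - w k.castSucc‖ ^ 2) + 2 * rho n z + 2 * rho n w := by
  have h4 : 4 * (rho2 n z w).re =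
      (∑ k : Fin n, ((z k.castSucc - conj (w k.castSucc)) ^ 2).re)
        - (2 * Complex.I * (z (Fin.last n) - conj (w (Fin.last n)))).re := by
    simp only [rho2, Complex.mul_re, Complex.sub_re, Complex.re_sum]
    norm_num
    ring
  simp only [h4, re_sq_sub_conj, re_two_I_mul_sub_conj, rho, Finset.sum_sub_distrib,
    ← Finset.mul_sum]
  ring

lemma rho_I_mul_last (n : ℕ) (s : ℝ) :
    rho n (fun j => if j = Fin.last n then (s : ℂ) * Complex.I else 0) = s := by
  simp [rho, (Fin.castSucc_lt_last _).ne]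

theorem stmt11 (n : ℕ) :
    (∀ u ∈ TB n, ∀ s : ℝ, 0 < s →
      (∑ k : Fin n, ‖u k.castSucc‖ ^ 2) + 2 * s ≤
        4 * (rho2 n u (fun j => if j = Fin.last n then (s : ℂ) * Complex.I else 0)).re) ∧
    ∀ z ∈ TB n, ∀ w ∈ TB n,
      (∑ k : Fin n, ‖z k.castSucc - w k.castSucc‖ ^ 2) ≤
        4 * ‖rho2 n z w‖ := by
  constructor
  · intro u hu s _
    rw [four_mul_re_rho2, rho_I_mul_last]
    simp only [(Fin.castSucc_lt_last _).ne, if_false, sub_zero]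
    linarith [rho_pos_of_mem_TB hu]
  · intro z hz w hw
    calc (∑ k : Fin n, ‖z k.castSucc - w k.castSucc‖ ^ 2)
        ≤ 4 * (rho2 n z w).re := by
          rw [four_mul_re_rho2]
          linarith [rho_pos_of_mem_TB hz, rho_pos_of_mem_TB hw]
      _ ≤ 4 * ‖rho2 n z w‖ := by gcongr; exact Complex.re_le_norm _
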